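/- arXiv:1710.11619 — 2 statements merged into one kernel-verified Lean document; each statement's English description precedes it below -/
import Mathlib

section
/- Feasibility of the connectivity-constrained path problem implies the graph-connectivity condition: if there exists a continuous path u : [0,1] → ℝ² from u_0 to u_F, and finitely many points g_1, ..., g_M ∈ ℝ², such that for every t, min_m ‖u(t) − g_m‖ ≤ d, then there is a finite sequence of indices I_1, ..., I_N ∈ {1,...,M} with ‖u_0 − g_{I_1}‖ ≤ d, ‖u_F − g_{I_N}‖ ≤ d, and ‖g_{I_{i+1}} − g_{I_i}‖ ≤ 2d for all i. -/
inductive ReachAux {E : Type*} [NormedAddCommGroup E] {M : ℕ} (g : Fin M → E)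
    (u0 : E) (d : ℝ) : Fin M → Prop
  | base (m : Fin M) (h : ‖u0 - g m‖ ≤ d) : ReachAux g u0 d m
  | step (m m' : Fin M) (h : ReachAux g u0 d m) (h2 : ‖g m' - g m‖ ≤ 2 * d) :
      ReachAux g u0 d m'

lemma reachAux_chain {E : Type*} [NormedAddCommGroup E] {M : ℕ} {g : Fin M → E}
    {u0 : E} {d : ℝ} {m : Fin M} (h : ReachAux g u0 d m) :
    ∃ (N : ℕ) (I : ℕ → Fin M), 1 ≤ N ∧ ‖u0 - g (I 1)‖ ≤ d ∧ I N = m ∧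
      ∀ i, 1 ≤ i → i ≤ N - 1 → ‖g (I (i + 1)) - g (I i)‖ ≤ 2 * d := by
  induction h with
  | base m h =>
      exact ⟨1, fun _ => m, le_refl 1, h, rfl, fun i h1 h2 => absurd (h1.trans h2) (by omega)⟩
  | step m m' h h2 ih =>
      obtain ⟨N, I, hN, h1, hNm, hchain⟩ := ih
      refine ⟨N + 1, fun i => if i ≤ N then I i else m', by omega, ?_, ?_, ?_⟩
      · simpa [hN] using h1
      · simp
      · intro i hi1 hi2
        have hiN : i ≤ N := by omega
        rcases Nat.lt_or_ge i N with hlt | hge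
        · have h' : i + 1 ≤ N := hlt
          simpa [h', hiN] using hchain i hi1 (by omega)
        · have hieq : i = N := le_antisymm hiN hge
          subst hieq
          simpa [hNm] using h2

theorem feasibility_implies_association_sequence
    (M : ℕ) (hM : 0 < M) (d : ℝ) (hd : 0 ≤ d)
    (u0 uF : EuclideanSpace ℝ (Fin 2))
    (g : Fin M → EuclideanSpace ℝ (Fin 2))
    (u : ℝ → EuclideanSpace ℝ (Fin 2))
    (hcont : ContinuousOn u (Set.Icc 0 1))
    (hu0 : u 0 = u0) (hu1 : u 1 = uF)
    (hcover : ∀ t ∈ Set.Icc (0 : ℝ) 1,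
      Finset.univ.inf' (Finset.univ_nonempty_iff.mpr ⟨⟨0, hM⟩⟩)
        (fun m => ‖u t - g m‖) ≤ d) :
    ∃ (N : ℕ) (I : ℕ → Fin M), 1 ≤ N ∧
      ‖u0 - g (I 1)‖ ≤ d ∧ ‖uF - g (I N)‖ ≤ d ∧
      ∀ i, 1 ≤ i → i ≤ N - 1 → ‖g (I (i + 1)) - g (I i)‖ ≤ 2 * d := by
  have hex : ∀ t ∈ Set.Icc (0 : ℝ) 1, ∃ m, ‖u t - g m‖ ≤ d := by
    intro t ht
    have h := hcover t ht
    rw [Finset.inf'_le_iff] at h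
    obtain ⟨m, _, hm⟩ := h
    exact ⟨m, hm⟩
  set Reach := ReachAux g u0 d with hReach
  let X := Set.Icc (0 : ℝ) 1
  haveI : PreconnectedSpace X := Subtype.preconnectedSpace isPreconnected_Icc
  let v : X → EuclideanSpace ℝ (Fin 2) := fun x => u x
  have hv : Continuous v := hcont.restrict
  set S : Set X := {x | ∃ m, Reach m ∧ ‖v x - g m‖ ≤ d} with hS
  set T : Set X := {x | ∃ m, ¬ Reach m ∧ ‖v x - g m‖ ≤ d} with hT
  have hclosed : ∀ (P : Fin M → Prop), IsClosed {x : X | ∃ m, P m ∧ ‖v x - g m‖ ≤ d} := by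
    intro P
    have : {x : X | ∃ m, P m ∧ ‖v x - g m‖ ≤ d}
        = ⋃ m, {x : X | P m ∧ ‖v x - g m‖ ≤ d} := by
      ext x; simp
    rw [this]
    apply isClosed_iUnion_of_finite
    intro m
    by_cases hm : P m
    · have : {x : X | P m ∧ ‖v x - g m‖ ≤ d} = {x : X | ‖v x - g m‖ ≤ d} := by
        ext x; simp [hm]
      rw [this]
      exact isClosed_le (by fun_prop) continuous_const
    · have : {x : X | P m ∧ ‖v x - g m‖ ≤ d} = ∅ := by
        ext x; simp [hm]
      rw [this]; exact isClosed_empty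
  have hSc : IsClosed S := hclosed _
  have hTc : IsClosed T := hclosed _
  have hdisj : ∀ x, x ∈ S → x ∉ T := by
    rintro x ⟨m, hm, hxm⟩ ⟨m', hm', hxm'⟩
    apply hm'
    have : ‖g m' - g m‖ ≤ 2 * d := by
      have := norm_sub_le_norm_sub_add_norm_sub (g m') (v x) (g m)
      calc ‖g m' - g m‖ ≤ ‖g m' - v x‖ + ‖v x - g m‖ := this
        _ = ‖v x - g m'‖ + ‖v x - g m‖ := by rw [norm_sub_rev]
        _ ≤ d + d := add_le_add hxm' hxm
        _ = 2 * d := by ring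
    exact ReachAux.step m m' hm this
  have hunion : ∀ x : X, x ∈ S ∨ x ∈ T := by
    intro x
    obtain ⟨m, hm⟩ := hex x.1 x.2
    by_cases hr : Reach m
    · exact Or.inl ⟨m, hr, hm⟩
    · exact Or.inr ⟨m, hr, hm⟩
  have hSo : IsOpen S := by
    have : Sᶜ = T := by
      ext x
      constructor
      · intro hx
        rcases hunion x with h | h
        · exact absurd h hx
        · exact h
      · intro hx hxS
        exact hdisj x hxS hx
    rw [← isClosed_compl_iff, this]
    exact hTc
  have h0X : (0 : ℝ) ∈ X := by constructor <;> norm_num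
  have h1X : (1 : ℝ) ∈ X := by constructor <;> norm_num
  have hSne : S.Nonempty := by
    obtain ⟨m, hm⟩ := hex 0 h0X
    rw [hu0] at hm
    exact ⟨⟨0, h0X⟩, m, ReachAux.base m hm, by simpa [v, hu0] using hm⟩
  have hSuniv : S = Set.univ := (IsClopen.eq_univ ⟨hSc, hSo⟩ hSne)
  have h1S : (⟨1, h1X⟩ : X) ∈ S := by rw [hSuniv]; trivial
  obtain ⟨mF, hRF, hF⟩ := h1S
  obtain ⟨N, I, hN, hI1, hINm, hchain⟩ := reachAux_chain hRF
  refine ⟨N, I, hN, hI1, ?_, hchain⟩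
  rw [hINm]
  simpa [v, hu1] using hF
end

section
/- The graph-connectivity condition implies feasibility: if there exist indices I_1, ..., I_N ∈ {1,...,M} with ‖u_0 − g_{I_1}‖ ≤ d, ‖u_F − g_{I_N}‖ ≤ d, and ‖g_{I_{i+1}} − g_{I_i}‖ ≤ 2d for i = 1,...,N−1 (with consecutive g's distinct and d > 0), then there exists a continuous (piecewise-linear) path u : [0,1] → ℝ² from u_0 to u_F such that min_{1≤m≤M} ‖u(t) − g_m‖ ≤ d for all t ∈ [0,1]. -/
/-! The union `S` of the closed balls of radius `d` around the `g m` contains the segment from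
`u₀` to `g_{I₁}`, the segment from `g_{I_N}` to `u_F`, and, for each `i`, the two half-segments from
`g_{I_i}` and from `g_{I_{i+1}}` to their midpoint, which lies within `d` of both.  Concatenating
these segments gives a path from `u₀` to `u_F` inside `S`. -/

open Metric Set

theorem joinedIn_closedBall {E : Type*} [NormedAddCommGroup E] [NormedSpace ℝ E]
    {c x y : E} {r : ℝ} (hx : x ∈ closedBall c r) (hy : y ∈ closedBall c r) :
    JoinedIn (closedBall c r) x y :=
  ((convex_closedBall c r).isPathConnected ⟨x, hx⟩).joinedIn x hx y hy

theorem joinedIn_union_closedBall_of_dist_le {E : Type*} [NormedAddCommGroup E]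
    [NormedSpace ℝ E] {a b : E} {r : ℝ} (h : dist a b ≤ 2 * r) :
    JoinedIn (closedBall a r ∪ closedBall b r) a b := by
  have hr : 0 ≤ r := by linarith [dist_nonneg (x := a) (y := b)]
  have half : ‖(2 : ℝ)‖⁻¹ * dist a b ≤ r := by
    rw [Real.norm_two]; linarith
  have hma : midpoint ℝ a b ∈ closedBall a r := by
    rwa [mem_closedBall, dist_comm, dist_left_midpoint]
  have hmb : midpoint ℝ a b ∈ closedBall b r := by
    rwa [mem_closedBall, dist_midpoint_right]
  exact ((joinedIn_closedBall (mem_closedBall_self hr) hma).mono subset_union_left).trans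
    ((joinedIn_closedBall hmb (mem_closedBall_self hr)).mono subset_union_right)

theorem joinedIn_of_joinedIn_succ {X : Type*} [TopologicalSpace X] {S : Set X} {p : ℕ → X}
    {a b : ℕ} (hab : a ≤ b) (ha : p a ∈ S)
    (h : ∀ i, a ≤ i → i < b → JoinedIn S (p i) (p (i + 1))) :
    JoinedIn S (p a) (p b) := by
  induction b, hab using Nat.le_induction with
  | base => exact JoinedIn.refl ha
  | succ n han ih =>
    exact (ih fun i hai hin => h i hai (by omega)).trans (h n han (by omega))

theorem JoinedIn.exists_continuousOn_Icc {X : Type*} [TopologicalSpace X] {S : Set X} {x y : X}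
    (h : JoinedIn S x y) :
    ∃ u : ℝ → X, ContinuousOn u (Icc 0 1) ∧ u 0 = x ∧ u 1 = y ∧ ∀ t ∈ Icc (0 : ℝ) 1, u t ∈ S := by
  obtain ⟨γ, hγ⟩ := h
  exact ⟨γ.extend, γ.continuous_extend.continuousOn, γ.extend_zero, γ.extend_one,
    fun t ht => by simpa only [Path.extend_apply γ ht] using hγ _⟩

theorem association_sequence_implies_feasible_path_general
    (M : ℕ) (hM : 0 < M) (d : ℝ)
    (u0 uF : EuclideanSpace ℝ (Fin 2))
    (g : Fin M → EuclideanSpace ℝ (Fin 2))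
    (N : ℕ) (hN : 1 ≤ N) (I : ℕ → Fin M)
    (h0 : ‖u0 - g (I 1)‖ ≤ d) (hF : ‖uF - g (I N)‖ ≤ d)
    (hgg : ∀ i, 1 ≤ i → i ≤ N - 1 → ‖g (I (i + 1)) - g (I i)‖ ≤ 2 * d) :
    ∃ u : ℝ → EuclideanSpace ℝ (Fin 2),
      ContinuousOn u (Set.Icc 0 1) ∧ u 0 = u0 ∧ u 1 = uF ∧
      ∀ t ∈ Set.Icc (0 : ℝ) 1,
        Finset.univ.inf' (Finset.univ_nonempty_iff.mpr ⟨⟨0, hM⟩⟩)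
          (fun m => ‖u t - g m‖) ≤ d := by
  set S := ⋃ m, closedBall (g m) d
  have hball : ∀ m, closedBall (g m) d ⊆ S := subset_iUnion (fun m => closedBall (g m) d)
  have hcenter : ∀ m, g m ∈ closedBall (g m) d :=
    fun _ => mem_closedBall_self ((norm_nonneg _).trans h0)
  have start : JoinedIn S u0 (g (I 1)) :=
    (joinedIn_closedBall (mem_closedBall_iff_norm.2 h0) (hcenter _)).mono (hball _)
  have finish : JoinedIn S (g (I N)) uF :=
    ((joinedIn_closedBall (mem_closedBall_iff_norm.2 hF) (hcenter _)).mono (hball _)).symm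
  have chain : JoinedIn S (g (I 1)) (g (I N)) :=
    joinedIn_of_joinedIn_succ (p := fun i => g (I i)) hN (hball _ (hcenter _)) fun i hi hiN =>
      (joinedIn_union_closedBall_of_dist_le (by
        rw [dist_comm, dist_eq_norm]; exact hgg i hi (by omega))).mono
        (union_subset (hball _) (hball _))
  obtain ⟨u, hu, hu0, hu1, huS⟩ := ((start.trans chain).trans finish).exists_continuousOn_Icc
  refine ⟨u, hu, hu0, hu1, fun t ht => ?_⟩
  obtain ⟨m, hm⟩ := mem_iUnion.1 (huS t ht)
  exact (Finset.inf'_le _ (Finset.mem_univ m)).trans (mem_closedBall_iff_norm.1 hm)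

theorem association_sequence_implies_feasible_path
    (M : ℕ) (hM : 0 < M) (d : ℝ) (hd : 0 < d)
    (u0 uF : EuclideanSpace ℝ (Fin 2))
    (g : Fin M → EuclideanSpace ℝ (Fin 2))
    (N : ℕ) (hN : 1 ≤ N) (I : ℕ → Fin M)
    (h0 : ‖u0 - g (I 1)‖ ≤ d) (hF : ‖uF - g (I N)‖ ≤ d)
    (hne : ∀ i, 1 ≤ i → i ≤ N - 1 → g (I (i + 1)) ≠ g (I i))
    (hgg : ∀ i, 1 ≤ i → i ≤ N - 1 → ‖g (I (i + 1)) - g (I i)‖ ≤ 2 * d) :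
    ∃ u : ℝ → EuclideanSpace ℝ (Fin 2),
      ContinuousOn u (Set.Icc 0 1) ∧ u 0 = u0 ∧ u 1 = uF ∧
      ∀ t ∈ Set.Icc (0 : ℝ) 1,
        Finset.univ.inf' (Finset.univ_nonempty_iff.mpr ⟨⟨0, hM⟩⟩)
          (fun m => ‖u t - g m‖) ≤ d :=
  association_sequence_implies_feasible_path_general M hM d u0 uF g N hN I h0 hF hgg
end
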